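/- arXiv:1105.2192 — 7 statements merged into one kernel-verified Lean document; each statement's English description precedes it below -/
import Mathlib

section
/- Every order automorphism of ℝ × ℝ with the product order is either of the form (x⁺, x⁻) ↦ (f(x⁺), g(x⁻)) or of the form (x⁺, x⁻) ↦ (g(x⁻), f(x⁺)), where f, g : ℝ → ℝ are increasing homeomorphisms of the real line. -/
/-- An increasing homeomorphism of ℝ: a strictly increasing continuous bijection. -/
def IncHomeo (f : ℝ → ℝ) : Prop :=
  StrictMono f ∧ Continuous f ∧ Function.Bijective f

namespace Stmt5Aux

/-- `q` is strictly north-west of `p`. -/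
def NWq (p q : ℝ × ℝ) : Prop := q.1 < p.1 ∧ p.2 < q.2

/-- `q` is strictly south-east of `p`. -/
def SEq (p q : ℝ × ℝ) : Prop := p.1 < q.1 ∧ q.2 < p.2

lemma inc_char (a b : ℝ × ℝ) : (¬ a ≤ b ∧ ¬ b ≤ a) ↔ (NWq a b ∨ SEq a b) := by
  simp only [NWq, SEq, Prod.le_def, not_and_or, not_le]
  constructor
  · rintro ⟨h1 | h1, h2 | h2⟩
    · linarith
    · exact Or.inl ⟨h1, h2⟩
    · exact Or.inr ⟨h2, h1⟩
    · linarith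
  · rintro (⟨h1, h2⟩ | ⟨h1, h2⟩)
    · exact ⟨Or.inl h1, Or.inr h2⟩
    · exact ⟨Or.inr h2, Or.inl h1⟩

section

variable {F : ℝ × ℝ → ℝ × ℝ}

lemma inj (hiff : ∀ p q : ℝ × ℝ, p ≤ q ↔ F p ≤ F q) : Function.Injective F :=
  fun p q h => le_antisymm ((hiff p q).mpr h.le) ((hiff q p).mpr h.ge)

lemma inc_F (hiff : ∀ p q : ℝ × ℝ, p ≤ q ↔ F p ≤ F q) (p q : ℝ × ℝ)
    (h : NWq p q ∨ SEq p q) : NWq (F p) (F q) ∨ SEq (F p) (F q) := by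
  have h' := (inc_char p q).mpr h
  exact (inc_char (F p) (F q)).mp
    ⟨fun hle => h'.1 ((hiff p q).mpr hle), fun hle => h'.2 ((hiff q p).mpr hle)⟩

lemma inc_R (hiff : ∀ p q : ℝ × ℝ, p ≤ q ↔ F p ≤ F q) (p q : ℝ × ℝ)
    (h : NWq (F p) (F q) ∨ SEq (F p) (F q)) : NWq p q ∨ SEq p q := by
  have h' := (inc_char (F p) (F q)).mpr h
  exact (inc_char p q).mp
    ⟨fun hle => h'.1 ((hiff p q).mp hle), fun hle => h'.2 ((hiff q p).mp hle)⟩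

/-- Key connectivity lemma: if `r, t` are incomparable to `p` and both below a common `u`
incomparable to `p`, and `F r` is NW of `F p`, then so is `F t`. -/
lemma up_NW (hiff : ∀ p q : ℝ × ℝ, p ≤ q ↔ F p ≤ F q) (p r t u : ℝ × ℝ)
    (ht : NWq p t ∨ SEq p t) (hu : NWq p u ∨ SEq p u)
    (hru : r ≤ u) (htu : t ≤ u) (hNW : NWq (F p) (F r)) : NWq (F p) (F t) := by
  have hFu := inc_F hiff p u hu
  have hFt := inc_F hiff p t ht
  have h1 := Prod.le_def.mp ((hiff r u).mp hru)
  have h2 := Prod.le_def.mp ((hiff t u).mp htu)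
  have hu2 : (F p).2 < (F u).2 := lt_of_lt_of_le hNW.2 h1.2
  have hu1 : (F u).1 < (F p).1 := by
    rcases hFu with h | h
    · exact h.1
    · exact absurd hu2 (not_lt.mpr h.2.le)
  have ht1 : (F t).1 < (F p).1 := lt_of_le_of_lt h2.1 hu1
  rcases hFt with h | h
  · exact h
  · exact absurd ht1 (not_lt.mpr h.1.le)

/-- Same with SE in place of NW. -/
lemma up_SE (hiff : ∀ p q : ℝ × ℝ, p ≤ q ↔ F p ≤ F q) (p r t u : ℝ × ℝ)
    (ht : NWq p t ∨ SEq p t) (hu : NWq p u ∨ SEq p u)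
    (hru : r ≤ u) (htu : t ≤ u) (hSE : SEq (F p) (F r)) : SEq (F p) (F t) := by
  have hFu := inc_F hiff p u hu
  have hFt := inc_F hiff p t ht
  have h1 := Prod.le_def.mp ((hiff r u).mp hru)
  have h2 := Prod.le_def.mp ((hiff t u).mp htu)
  have hu1 : (F p).1 < (F u).1 := lt_of_lt_of_le hSE.1 h1.1
  have hu2 : (F u).2 < (F p).2 := by
    rcases hFu with h | h
    · exact absurd hu1 (not_lt.mpr h.1.le)
    · exact h.2
  have ht2 : (F t).2 < (F p).2 := lt_of_le_of_lt h2.2 hu2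
  rcases hFt with h | h
  · exact absurd ht2 (not_lt.mpr h.2.le)
  · exact h

/-- `F` sends the NW quadrant of `p` into the NW quadrant of `F p`. -/
def Pos (F : ℝ × ℝ → ℝ × ℝ) (p : ℝ × ℝ) : Prop := ∀ r, NWq p r → NWq (F p) (F r)

/-- `F` sends the SE quadrant of `p` into the SE quadrant of `F p`. -/
def Pos' (F : ℝ × ℝ → ℝ × ℝ) (p : ℝ × ℝ) : Prop := ∀ r, SEq p r → SEq (F p) (F r)

lemma pos_pos' (hsurj : Function.Surjective F)
    (hiff : ∀ p q : ℝ × ℝ, p ≤ q ↔ F p ≤ F q) {p : ℝ × ℝ}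
    (hp : Pos F p) : Pos' F p := by
  intro r hr
  rcases inc_F hiff p r (Or.inr hr) with hN | hS
  · exfalso
    obtain ⟨t, ht⟩ := hsurj ((F p).1 + 1, (F p).2 - 1)
    have hs : NWq (F p) (F t) ∨ SEq (F p) (F t) := by
      rw [ht]; exact Or.inr ⟨by simp, by simp⟩
    rcases inc_R hiff p t hs with hNt | hSt
    · have h := hp t hNt
      rw [ht] at h
      have : (F p).1 + 1 < (F p).1 := h.1
      linarith
    · -- both r and t are SE of p; use the common upper bound
      set u : ℝ × ℝ := (max r.1 t.1, max r.2 t.2) with hu_def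
      have hut : NWq p u ∨ SEq p u :=
        Or.inr ⟨lt_max_iff.mpr (Or.inl hr.1), max_lt hr.2 hSt.2⟩
      have h := up_NW hiff p r t u (Or.inr hSt) hut
        ⟨le_max_left _ _, le_max_left _ _⟩ ⟨le_max_right _ _, le_max_right _ _⟩ hN
      rw [ht] at h
      have : (F p).1 + 1 < (F p).1 := h.1
      linarith
  · exact hS

lemma pos'_pos (hsurj : Function.Surjective F)
    (hiff : ∀ p q : ℝ × ℝ, p ≤ q ↔ F p ≤ F q) {p : ℝ × ℝ}
    (hp : Pos' F p) : Pos F p := by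
  intro r hr
  rcases inc_F hiff p r (Or.inl hr) with hN | hS
  · exact hN
  · exfalso
    obtain ⟨t, ht⟩ := hsurj ((F p).1 - 1, (F p).2 + 1)
    have hs : NWq (F p) (F t) ∨ SEq (F p) (F t) := by
      rw [ht]; exact Or.inl ⟨by simp, by simp⟩
    rcases inc_R hiff p t hs with hNt | hSt
    · set u : ℝ × ℝ := (max r.1 t.1, max r.2 t.2) with hu_def
      have hut : NWq p u ∨ SEq p u :=
        Or.inl ⟨max_lt hr.1 hNt.1, lt_max_iff.mpr (Or.inl hr.2)⟩
      have h := up_SE hiff p r t u (Or.inl hNt) hut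
        ⟨le_max_left _ _, le_max_left _ _⟩ ⟨le_max_right _ _, le_max_right _ _⟩ hS
      rw [ht] at h
      have : (F p).2 + 1 < (F p).2 := h.2
      linarith
    · have h := hp t hSt
      rw [ht] at h
      have : (F p).2 + 1 < (F p).2 := h.2
      linarith

lemma prop_NW (hsurj : Function.Surjective F)
    (hiff : ∀ p q : ℝ × ℝ, p ≤ q ↔ F p ≤ F q) {p q : ℝ × ℝ}
    (hp : Pos F p) (h : NWq p q) : Pos F q := by
  have hFq : NWq (F p) (F q) := hp q h
  apply pos'_pos hsurj hiff
  intro r hr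
  -- p is SE of q, F p is SE of F q
  set u : ℝ × ℝ := (max p.1 r.1, max p.2 r.2) with hu_def
  have hut : NWq q u ∨ SEq q u :=
    Or.inr ⟨lt_max_iff.mpr (Or.inl h.1), max_lt h.2 hr.2⟩
  exact up_SE hiff q p r u (Or.inr hr) hut
    ⟨le_max_left _ _, le_max_left _ _⟩ ⟨le_max_right _ _, le_max_right _ _⟩
    ⟨hFq.1, hFq.2⟩

lemma prop_SE (hsurj : Function.Surjective F)
    (hiff : ∀ p q : ℝ × ℝ, p ≤ q ↔ F p ≤ F q) {p q : ℝ × ℝ}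
    (hp : Pos F p) (h : SEq p q) : Pos F q := by
  have hFq : SEq (F p) (F q) := pos_pos' hsurj hiff hp q h
  intro r hr
  set u : ℝ × ℝ := (max p.1 r.1, max p.2 r.2) with hu_def
  have hut : NWq q u ∨ SEq q u :=
    Or.inl ⟨max_lt h.1 hr.1, lt_max_iff.mpr (Or.inl h.2)⟩
  exact up_NW hiff q p r u (Or.inl hr) hut
    ⟨le_max_left _ _, le_max_left _ _⟩ ⟨le_max_right _ _, le_max_right _ _⟩
    ⟨hFq.1, hFq.2⟩

lemma prop_all (hsurj : Function.Surjective F)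
    (hiff : ∀ p q : ℝ × ℝ, p ≤ q ↔ F p ≤ F q) {p : ℝ × ℝ}
    (hp : Pos F p) (q : ℝ × ℝ) : Pos F q := by
  set r : ℝ × ℝ := (min p.1 q.1 - 1, max p.2 q.2 + 1) with hr_def
  have h1 : NWq p r := ⟨by simp [hr_def]; linarith [min_le_left p.1 q.1], by
    simp [hr_def]; linarith [le_max_left p.2 q.2]⟩
  have h2 : SEq r q := ⟨by simp [hr_def]; linarith [min_le_right p.1 q.1], by
    simp [hr_def]; linarith [le_max_right p.2 q.2]⟩
  exact prop_SE hsurj hiff (prop_NW hsurj hiff hp h1) h2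

/-- Main structural lemma for positively-oriented automorphisms. -/
lemma main_pos (hsurj : Function.Surjective F)
    (hiff : ∀ p q : ℝ × ℝ, p ≤ q ↔ F p ≤ F q)
    (hp : ∀ q, Pos F q) :
    ∃ f g : ℝ → ℝ, IncHomeo f ∧ IncHomeo g ∧ ∀ x y : ℝ, F (x, y) = (f x, g y) := by
  have hU : ∀ x y y' : ℝ, (F (x, y)).1 = (F (x, y')).1 := by
    have key : ∀ x y y' : ℝ, y < y' → ¬ (F (x, y)).1 < (F (x, y')).1 := by
      intro x y y' hlt hcon
      have hpq : F (x, y) ≤ F (x, y') := (hiff _ _).mp ⟨le_refl x, hlt.le⟩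
      obtain ⟨t, ht⟩ := hsurj ((F (x, y')).1, (F (x, y)).2 - 1)
      have htq : t ≤ (x, y') := by
        apply (hiff _ _).mpr
        rw [ht, Prod.mk_le_mk]
        exact ⟨le_refl _, by linarith [(Prod.le_def.mp hpq).2]⟩
      have hs : NWq (F (x, y)) (F t) ∨ SEq (F (x, y)) (F t) := by
        rw [ht]; exact Or.inr ⟨hcon, by simp⟩
      rcases inc_R hiff (x, y) t hs with hN | hS
      · have h := hp (x, y) t hN
        rw [ht] at h
        have : (F (x, y')).1 < (F (x, y)).1 := h.1
        linarith
      · have h1 : t.1 ≤ x := (Prod.le_def.mp htq).1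
        have h2 : x < t.1 := hS.1
        linarith
    intro x y y'
    rcases lt_trichotomy y y' with hlt | rfl | hlt
    · have hle : F (x, y) ≤ F (x, y') := (hiff _ _).mp ⟨le_refl x, hlt.le⟩
      exact le_antisymm (Prod.le_def.mp hle).1 (not_lt.mp (key x y y' hlt))
    · rfl
    · have hle : F (x, y') ≤ F (x, y) := (hiff _ _).mp ⟨le_refl x, hlt.le⟩
      exact le_antisymm (not_lt.mp (key x y' y hlt)) (Prod.le_def.mp hle).1
  have hV : ∀ x x' y : ℝ, (F (x, y)).2 = (F (x', y)).2 := by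
    have key : ∀ x x' y : ℝ, x < x' → ¬ (F (x, y)).2 < (F (x', y)).2 := by
      intro x x' y hlt hcon
      have hpq : F (x, y) ≤ F (x', y) := (hiff _ _).mp ⟨hlt.le, le_refl y⟩
      obtain ⟨t, ht⟩ := hsurj ((F (x, y)).1 - 1, (F (x', y)).2)
      have htq : t ≤ (x', y) := by
        apply (hiff _ _).mpr
        rw [ht, Prod.mk_le_mk]
        exact ⟨by linarith [(Prod.le_def.mp hpq).1], le_refl _⟩
      have hs : NWq (F (x, y)) (F t) ∨ SEq (F (x, y)) (F t) := by
        rw [ht]; exact Or.inl ⟨by simp, hcon⟩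
      rcases inc_R hiff (x, y) t hs with hN | hS
      · have h1 : t.2 ≤ y := (Prod.le_def.mp htq).2
        have h2 : y < t.2 := hN.2
        linarith
      · have h := pos_pos' hsurj hiff (hp (x, y)) t hS
        rw [ht] at h
        have : (F (x', y)).2 < (F (x, y)).2 := h.2
        linarith
    intro x x' y
    rcases lt_trichotomy x x' with hlt | rfl | hlt
    · have hle : F (x, y) ≤ F (x', y) := (hiff _ _).mp ⟨hlt.le, le_refl y⟩
      exact le_antisymm (Prod.le_def.mp hle).2 (not_lt.mp (key x x' y hlt))
    · rfl
    · have hle : F (x', y) ≤ F (x, y) := (hiff _ _).mp ⟨hlt.le, le_refl y⟩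
      exact le_antisymm (not_lt.mp (key x' x y hlt)) (Prod.le_def.mp hle).2
  set f : ℝ → ℝ := fun x => (F (x, 0)).1 with hf_def
  set g : ℝ → ℝ := fun y => (F (0, y)).2 with hg_def
  have hFxy : ∀ x y : ℝ, F (x, y) = (f x, g y) := by
    intro x y
    have h1 : (F (x, y)).1 = f x := hU x y 0
    have h2 : (F (x, y)).2 = g y := hV x 0 y
    exact Prod.ext h1 h2
  have hinj := inj hiff
  have hfmono : StrictMono f := by
    intro a b hab
    have hle : F (a, 0) ≤ F (b, 0) := (hiff _ _).mp ⟨hab.le, le_refl _⟩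
    have h1 : f a ≤ f b := by
      have := (Prod.le_def.mp hle).1
      rwa [hFxy, hFxy] at this
    rcases h1.lt_or_eq with h | h
    · exact h
    · exfalso
      have : F (a, 0) = F (b, 0) := by rw [hFxy, hFxy, h]
      have := hinj this
      have : a = b := congrArg Prod.fst this
      linarith
  have hgmono : StrictMono g := by
    intro a b hab
    have hle : F (0, a) ≤ F (0, b) := (hiff _ _).mp ⟨le_refl _, hab.le⟩
    have h1 : g a ≤ g b := by
      have := (Prod.le_def.mp hle).2
      rwa [hFxy, hFxy] at this
    rcases h1.lt_or_eq with h | h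
    · exact h
    · exfalso
      have : F (0, a) = F (0, b) := by rw [hFxy, hFxy, h]
      have := hinj this
      have : a = b := congrArg Prod.snd this
      linarith
  have hfsurj : Function.Surjective f := by
    intro c
    obtain ⟨⟨x, y⟩, hxy⟩ := hsurj (c, g 0)
    rw [hFxy] at hxy
    have h1 : f x = c := congrArg Prod.fst hxy
    exact ⟨x, h1⟩
  have hgsurj : Function.Surjective g := by
    intro c
    obtain ⟨⟨x, y⟩, hxy⟩ := hsurj (f 0, c)
    rw [hFxy] at hxy
    have h1 : g y = c := congrArg Prod.snd hxy
    exact ⟨y, h1⟩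
  refine ⟨f, g, ⟨hfmono, ?_, hfmono.injective, hfsurj⟩,
    ⟨hgmono, ?_, hgmono.injective, hgsurj⟩, hFxy⟩
  · exact (StrictMono.orderIsoOfSurjective f hfmono hfsurj).continuous
  · exact (StrictMono.orderIsoOfSurjective g hgmono hgsurj).continuous

end

end Stmt5Aux

open Stmt5Aux in
theorem stmt_5 (F : ℝ × ℝ → ℝ × ℝ)
    (hsurj : Function.Surjective F)
    (hiff : ∀ p q : ℝ × ℝ, p ≤ q ↔ F p ≤ F q) :
    (∃ f g : ℝ → ℝ, IncHomeo f ∧ IncHomeo g ∧ ∀ x y : ℝ, F (x, y) = (f x, g y)) ∨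
    (∃ f g : ℝ → ℝ, IncHomeo f ∧ IncHomeo g ∧ ∀ x y : ℝ, F (x, y) = (g y, f x)) := by
  have hseed : NWq ((0 : ℝ), (0 : ℝ)) ((-1 : ℝ), (1 : ℝ)) := ⟨by norm_num, by norm_num⟩
  rcases inc_F hiff ((0 : ℝ), (0 : ℝ)) ((-1 : ℝ), (1 : ℝ)) (Or.inl hseed) with hN | hS
  · -- positively oriented
    have hp0 : Pos F ((0 : ℝ), (0 : ℝ)) := by
      intro r hr
      have hr1 : r.1 < (0 : ℝ) := hr.1
      have hut : NWq ((0 : ℝ), (0 : ℝ)) (max (-1) r.1, max 1 r.2) ∨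
          SEq ((0 : ℝ), (0 : ℝ)) (max (-1) r.1, max 1 r.2) :=
        Or.inl ⟨max_lt (by norm_num) hr1, lt_max_iff.mpr (Or.inl one_pos)⟩
      exact up_NW hiff _ ((-1 : ℝ), (1 : ℝ)) r _ (Or.inl hr) hut
        ⟨le_max_left _ _, le_max_left _ _⟩ ⟨le_max_right _ _, le_max_right _ _⟩ hN
    exact Or.inl (main_pos hsurj hiff (prop_all hsurj hiff hp0))
  · -- negatively oriented: compose with the swap
    set G : ℝ × ℝ → ℝ × ℝ := Prod.swap ∘ F with hG_def
    have hGsurj : Function.Surjective G := Prod.swap_surjective.comp hsurj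
    have hGiff : ∀ p q : ℝ × ℝ, p ≤ q ↔ G p ≤ G q := by
      intro p q
      rw [hiff p q]
      exact (Prod.swap_le_swap).symm
    have hN' : NWq (G ((0 : ℝ), (0 : ℝ))) (G ((-1 : ℝ), (1 : ℝ))) := ⟨hS.2, hS.1⟩
    have hp0 : Pos G ((0 : ℝ), (0 : ℝ)) := by
      intro r hr
      have hr1 : r.1 < (0 : ℝ) := hr.1
      have hut : NWq ((0 : ℝ), (0 : ℝ)) (max (-1) r.1, max 1 r.2) ∨
          SEq ((0 : ℝ), (0 : ℝ)) (max (-1) r.1, max 1 r.2) :=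
        Or.inl ⟨max_lt (by norm_num) hr1, lt_max_iff.mpr (Or.inl one_pos)⟩
      exact up_NW hGiff _ ((-1 : ℝ), (1 : ℝ)) r _ (Or.inl hr) hut
        ⟨le_max_left _ _, le_max_left _ _⟩ ⟨le_max_right _ _, le_max_right _ _⟩ hN'
    obtain ⟨f, g, hf, hg, hfg⟩ := main_pos hGsurj hGiff (prop_all hGsurj hGiff hp0)
    refine Or.inr ⟨f, g, hf, hg, fun x y => ?_⟩
    have h := hfg x y
    have h2 : Prod.swap (G (x, y)) = Prod.swap (f x, g y) := congrArg Prod.swap h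
    simpa [hG_def, Prod.swap] using h2
end

section
/- Every order automorphism of ℝ × ℝ with the product order is a homeomorphism of ℝ² with the standard topology (continuity follows automatically from being an order automorphism). -/
/-!
In a product of two linear orders, `a` lies strictly below `x` in both coordinates iff `x` is the
join of two incomparable elements above `a`; so order isomorphisms between such products preserve
this relation. They therefore map open boxes `Ioo l₁ u₁ ×ˢ Ioo l₂ u₂` onto open boxes, and these
form a neighbourhood basis of the product of order topologies.
-/

open Set Filter Topology

variable {α β γ δ : Type*} [LinearOrder α] [LinearOrder β] [LinearOrder γ] [LinearOrder δ]

theorem Prod.fst_lt_and_snd_lt_iff_exists_incompRel_sup {a x : α × β} :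
    a.1 < x.1 ∧ a.2 < x.2 ↔
      ∃ b c : α × β, a ≤ b ∧ a ≤ c ∧ IncompRel (· ≤ ·) b c ∧ b ⊔ c = x := by
  constructor
  · rintro ⟨h₁, h₂⟩
    refine ⟨(a.1, x.2), (x.1, a.2), ⟨le_rfl, h₂.le⟩, ⟨h₁.le, le_rfl⟩, ⟨?_, ?_⟩, ?_⟩
    · simp [Prod.le_def, h₂]
    · simp [Prod.le_def, h₁]
    · ext <;> simp [h₁.le, h₂.le]
  · rintro ⟨b, c, hab, hac, ⟨hbc, hcb⟩, rfl⟩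
    simp only [Prod.le_def, not_and_or, not_le] at hab hac hbc hcb
    simp only [Prod.fst_sup, Prod.snd_sup, lt_sup_iff]
    refine ⟨?_, ?_⟩ <;> by_contra! h <;>
      rcases hbc with hbc | hbc <;> rcases hcb with hcb | hcb <;> order

namespace OrderIso

theorem fst_lt_and_snd_lt_iff (e : α × β ≃o γ × δ) {a x : α × β} :
    (e a).1 < (e x).1 ∧ (e a).2 < (e x).2 ↔ a.1 < x.1 ∧ a.2 < x.2 := by
  simp only [Prod.fst_lt_and_snd_lt_iff_exists_incompRel_sup, IncompRel, e.surjective.exists,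
    e.le_iff_le, ← e.map_sup, e.apply_eq_iff_eq]

theorem preimage_Ioo_prod_Ioo (e : α × β ≃o γ × δ) (l u : γ × δ) :
    e ⁻¹' (Ioo l.1 u.1 ×ˢ Ioo l.2 u.2) =
      Ioo (e.symm l).1 (e.symm u).1 ×ˢ Ioo (e.symm l).2 (e.symm u).2 := by
  ext p
  have hl := e.fst_lt_and_snd_lt_iff (a := e.symm l) (x := p)
  have hu := e.fst_lt_and_snd_lt_iff (a := p) (x := e.symm u)
  rw [e.apply_symm_apply] at hl hu
  simp only [mem_preimage, mem_prod, mem_Ioo]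
  tauto

theorem continuous_of_prod [TopologicalSpace α] [OrderClosedTopology α] [TopologicalSpace β]
    [OrderClosedTopology β] [TopologicalSpace γ] [OrderTopology γ] [NoMaxOrder γ] [NoMinOrder γ]
    [TopologicalSpace δ] [OrderTopology δ] [NoMaxOrder δ] [NoMinOrder δ]
    (e : α × β ≃o γ × δ) : Continuous e := by
  refine continuous_iff_continuousAt.2 fun x s hs => ?_
  obtain ⟨u, hu, v, hv, huv⟩ := mem_nhds_prod_iff.1 hs
  obtain ⟨l₁, u₁, hx₁, hu₁⟩ := mem_nhds_iff_exists_Ioo_subset.1 hu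
  obtain ⟨l₂, u₂, hx₂, hv₂⟩ := mem_nhds_iff_exists_Ioo_subset.1 hv
  have hbox : x ∈ e ⁻¹' (Ioo (l₁, l₂).1 (u₁, u₂).1 ×ˢ Ioo (l₁, l₂).2 (u₁, u₂).2) := ⟨hx₁, hx₂⟩
  rw [preimage_Ioo_prod_Ioo] at hbox
  refine mem_map.2 (mem_of_superset ((isOpen_Ioo.prod isOpen_Ioo).mem_nhds hbox) ?_)
  rw [← preimage_Ioo_prod_Ioo]
  exact preimage_mono ((prod_mono hu₁ hv₂).trans huv)

def toHomeomorphOfProd [TopologicalSpace α] [OrderTopology α] [NoMaxOrder α] [NoMinOrder α]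
    [TopologicalSpace β] [OrderTopology β] [NoMaxOrder β] [NoMinOrder β]
    [TopologicalSpace γ] [OrderTopology γ] [NoMaxOrder γ] [NoMinOrder γ]
    [TopologicalSpace δ] [OrderTopology δ] [NoMaxOrder δ] [NoMinOrder δ]
    (e : α × β ≃o γ × δ) : α × β ≃ₜ γ × δ where
  toEquiv := e.toEquiv
  continuous_toFun := e.continuous_of_prod
  continuous_invFun := e.symm.continuous_of_prod

end OrderIso

theorem stmt_6 (F : ℝ × ℝ → ℝ × ℝ)
    (hsurj : Function.Surjective F)
    (hiff : ∀ p q : ℝ × ℝ, p ≤ q ↔ F p ≤ F q) :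
    ∃ H : ℝ × ℝ ≃ₜ ℝ × ℝ, ∀ p, H p = F p :=
  ⟨(OrderIso.ofSurjective (OrderEmbedding.ofMapLEIff F fun p q => (hiff p q).symm)
    hsurj).toHomeomorphOfProd, fun _ => rfl⟩
end

section
/- Let G be an order automorphism of ℝ × ℝ (product order) with G(0,0) = (0,0), and suppose there are functions u, v : ℝ → ℝ with G(x,0) = (u(x),0) and G(0,y) = (0,v(y)) for all x, y. Then G(x,y) = (u(x), v(y)) for all (x,y) ∈ ℝ². -/
/-!
In a distributive lattice a point `p` is determined by `p ⊓ o` and `p ⊔ o`. For `o = (a, b)`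
these are `(x, b) ⊓ (a, y)` and `(x, b) ⊔ (a, y)` when `p = (x, y)`, and an order isomorphism
preserves `⊓` and `⊔`, so it is determined by its values on the two axes through `o`.
-/

theorem OrderIso.prod_apply_eq_of_apply_axes {α β : Type*} [DistribLattice α] [DistribLattice β]
    (e : α × β ≃o α × β) (a : α) (b : β) (u : α → α) (v : β → β)
    (hu : ∀ x, e (x, b) = (u x, b)) (hv : ∀ y, e (a, y) = (a, v y)) (x : α) (y : β) :
    e (x, y) = (u x, v y) := by
  have hab : e (a, b) = (a, b) := Prod.ext (by rw [hv]) (by rw [hu])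
  refine eq_of_inf_eq_sup_eq (a := (a, b)) ?_ ?_
  · calc e (x, y) ⊓ (a, b) = e ((x, b) ⊓ (a, y)) := by
          rw [← hab, ← e.map_inf]; congr 1; ext <;> simp [inf_comm]
      _ = (u x, v y) ⊓ (a, b) := by rw [e.map_inf, hu, hv]; ext <;> simp [inf_comm]
  · calc e (x, y) ⊔ (a, b) = e ((x, b) ⊔ (a, y)) := by
          rw [← hab, ← e.map_sup]; congr 1; ext <;> simp [sup_comm]
      _ = (u x, v y) ⊔ (a, b) := by rw [e.map_sup, hu, hv]; ext <;> simp [sup_comm]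

theorem stmt_10_general (G : ℝ × ℝ → ℝ × ℝ)
    (hsurj : Function.Surjective G)
    (hiff : ∀ p q : ℝ × ℝ, p ≤ q ↔ G p ≤ G q)
    (u v : ℝ → ℝ)
    (hu : ∀ x : ℝ, G (x, 0) = (u x, 0))
    (hv : ∀ y : ℝ, G (0, y) = (0, v y)) :
    ∀ x y : ℝ, G (x, y) = (u x, v y) :=
  (OrderIso.ofSurjective (OrderEmbedding.ofMapLEIff G fun p q => (hiff p q).symm) hsurj)
    |>.prod_apply_eq_of_apply_axes 0 0 u v hu hv

theorem stmt_10 (G : ℝ × ℝ → ℝ × ℝ)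
    (hsurj : Function.Surjective G)
    (hiff : ∀ p q : ℝ × ℝ, p ≤ q ↔ G p ≤ G q)
    (hO : G (0, 0) = (0, 0))
    (u v : ℝ → ℝ)
    (hu : ∀ x : ℝ, G (x, 0) = (u x, 0))
    (hv : ∀ y : ℝ, G (0, y) = (0, v y)) :
    ∀ x y : ℝ, G (x, y) = (u x, v y) :=
  stmt_10_general G hsurj hiff u v hu hv
end

section
/- If an order automorphism G of ℝ × ℝ (product order) fixes the origin, then it maps the union of the two coordinate axes E = {(x,0) : x ∈ ℝ} ∪ {(0,y) : y ∈ ℝ} bijectively onto itself. -/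
private def MyBtw (p q : ℝ × ℝ) : Prop := (0 ≤ q ∧ q ≤ p) ∨ (p ≤ q ∧ q ≤ 0)

private def MyPp (p : ℝ × ℝ) : Prop :=
  (p ≤ 0 ∨ 0 ≤ p) ∧ ∀ q r, MyBtw p q → MyBtw p r → (q ≤ r ∨ r ≤ q)

private lemma mychar (p : ℝ × ℝ) :
    p ∈ ({p : ℝ × ℝ | p.2 = 0} ∪ {p : ℝ × ℝ | p.1 = 0}) ↔ MyPp p := by
  constructor
  · rintro (h | h)
    · refine ⟨?_, ?_⟩
      · rcases le_total p.1 0 with h1 | h1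
        · exact Or.inl (Prod.le_def.mpr ⟨h1, h.le⟩)
        · exact Or.inr (Prod.le_def.mpr ⟨h1, h.ge⟩)
      · intro q r hq hr
        have hq2 : q.2 = 0 := by
          rcases hq with ⟨h1, h2⟩ | ⟨h1, h2⟩
          · exact le_antisymm (h ▸ h2.2) h1.2
          · exact le_antisymm h2.2 (h ▸ h1.2)
        have hr2 : r.2 = 0 := by
          rcases hr with ⟨h1, h2⟩ | ⟨h1, h2⟩
          · exact le_antisymm (h ▸ h2.2) h1.2
          · exact le_antisymm h2.2 (h ▸ h1.2)
        rcases le_total q.1 r.1 with h1 | h1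
        · exact Or.inl (Prod.le_def.mpr ⟨h1, by rw [hq2, hr2]⟩)
        · exact Or.inr (Prod.le_def.mpr ⟨h1, by rw [hq2, hr2]⟩)
    · refine ⟨?_, ?_⟩
      · rcases le_total p.2 0 with h1 | h1
        · exact Or.inl (Prod.le_def.mpr ⟨h.le, h1⟩)
        · exact Or.inr (Prod.le_def.mpr ⟨h.ge, h1⟩)
      · intro q r hq hr
        have hq1 : q.1 = 0 := by
          rcases hq with ⟨h1, h2⟩ | ⟨h1, h2⟩
          · exact le_antisymm (h ▸ h2.1) h1.1
          · exact le_antisymm h2.1 (h ▸ h1.1)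
        have hr1 : r.1 = 0 := by
          rcases hr with ⟨h1, h2⟩ | ⟨h1, h2⟩
          · exact le_antisymm (h ▸ h2.1) h1.1
          · exact le_antisymm h2.1 (h ▸ h1.1)
        rcases le_total q.2 r.2 with h1 | h1
        · exact Or.inl (Prod.le_def.mpr ⟨by rw [hq1, hr1], h1⟩)
        · exact Or.inr (Prod.le_def.mpr ⟨by rw [hq1, hr1], h1⟩)
  · rintro ⟨hc | hc, ht⟩
    · have h1 : p.1 ≤ 0 := hc.1
      have h2 : p.2 ≤ 0 := hc.2
      have := ht (p.1, 0) (0, p.2)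
        (Or.inr ⟨Prod.le_def.mpr ⟨le_refl _, h2⟩, Prod.le_def.mpr ⟨h1, le_refl _⟩⟩)
        (Or.inr ⟨Prod.le_def.mpr ⟨h1, le_refl _⟩, Prod.le_def.mpr ⟨le_refl _, h2⟩⟩)
      rcases this with h | h
      · exact Or.inl (le_antisymm h2 (Prod.le_def.mp h).2)
      · exact Or.inr (le_antisymm h1 (Prod.le_def.mp h).1)
    · have h1 : (0:ℝ) ≤ p.1 := hc.1
      have h2 : (0:ℝ) ≤ p.2 := hc.2
      have := ht (p.1, 0) (0, p.2)
        (Or.inl ⟨Prod.le_def.mpr ⟨h1, le_refl _⟩, Prod.le_def.mpr ⟨le_refl _, h2⟩⟩)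
        (Or.inl ⟨Prod.le_def.mpr ⟨le_refl _, h2⟩, Prod.le_def.mpr ⟨h1, le_refl _⟩⟩)
      rcases this with h | h
      · exact Or.inr (le_antisymm (Prod.le_def.mp h).1 h1)
      · exact Or.inl (le_antisymm (Prod.le_def.mp h).2 h2)

theorem stmt_12 (G : ℝ × ℝ → ℝ × ℝ)
    (hsurj : Function.Surjective G)
    (hiff : ∀ p q : ℝ × ℝ, p ≤ q ↔ G p ≤ G q)
    (hO : G (0, 0) = (0, 0)) :
    Set.BijOn G ({p : ℝ × ℝ | p.2 = 0} ∪ {p : ℝ × ℝ | p.1 = 0})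
      ({p : ℝ × ℝ | p.2 = 0} ∪ {p : ℝ × ℝ | p.1 = 0}) := by
  have h0 : G 0 = 0 := hO
  have hz1 : ∀ q, (0:ℝ×ℝ) ≤ q ↔ 0 ≤ G q := fun q => (hiff 0 q).trans (by rw [h0])
  have hz2 : ∀ q, q ≤ (0:ℝ×ℝ) ↔ G q ≤ 0 := fun q => (hiff q 0).trans (by rw [h0])
  have hB : ∀ p q, MyBtw p q ↔ MyBtw (G p) (G q) := by
    intro p q
    unfold MyBtw
    rw [hz1 q, hz2 q, hiff q p, hiff p q]
  have hP : ∀ p, MyPp p ↔ MyPp (G p) := by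
    intro p
    constructor
    · rintro ⟨hc, ht⟩
      refine ⟨?_, ?_⟩
      · rcases hc with h | h
        · exact Or.inl ((hz2 p).mp h)
        · exact Or.inr ((hz1 p).mp h)
      · intro q' r' hq hr
        obtain ⟨q, rfl⟩ := hsurj q'
        obtain ⟨r, rfl⟩ := hsurj r'
        rcases ht q r ((hB p q).mpr hq) ((hB p r).mpr hr) with h | h
        · exact Or.inl ((hiff q r).mp h)
        · exact Or.inr ((hiff r q).mp h)
    · rintro ⟨hc, ht⟩
      refine ⟨?_, ?_⟩
      · rcases hc with h | h
        · exact Or.inl ((hz2 p).mpr h)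
        · exact Or.inr ((hz1 p).mpr h)
      · intro q r hq hr
        rcases ht (G q) (G r) ((hB p q).mp hq) ((hB p r).mp hr) with h | h
        · exact Or.inl ((hiff q r).mpr h)
        · exact Or.inr ((hiff r q).mpr h)
  have hinj : Function.Injective G := fun a b h =>
    le_antisymm ((hiff a b).mpr h.le) ((hiff b a).mpr h.ge)
  refine ⟨fun p hp => ?_, fun p _ q _ h => hinj h, fun p hp => ?_⟩
  · exact (mychar (G p)).mpr ((hP p).mp ((mychar p).mp hp))
  · obtain ⟨q, rfl⟩ := hsurj p
    exact ⟨q, (mychar q).mpr ((hP q).mpr ((mychar (G q)).mp hp)), rfl⟩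
end

section
/- If an order automorphism G of ℝ × ℝ (product order) fixes the origin, then either G maps each coordinate axis into itself, or G maps each coordinate axis into the other; in particular, two distinct nonzero points on the same axis are sent by G to points on the same axis. -/
private lemma aux_inj (G : ℝ × ℝ → ℝ × ℝ)
    (hiff : ∀ p q : ℝ × ℝ, p ≤ q ↔ G p ≤ G q) :
    Function.Injective G := fun p q h =>
  le_antisymm ((hiff p q).2 h.le) ((hiff q p).2 h.ge)

private lemma aux_axisPos (G : ℝ × ℝ → ℝ × ℝ)
    (hsurj : Function.Surjective G)
    (hiff : ∀ p q : ℝ × ℝ, p ≤ q ↔ G p ≤ G q)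
    (hO : G (0, 0) = (0, 0)) (p : ℝ × ℝ) (hp : ((0,0) : ℝ × ℝ) ≤ p)
    (hax : p.1 = 0 ∨ p.2 = 0) : (G p).1 = 0 ∨ (G p).2 = 0 := by
  by_contra h
  push_neg at h
  obtain ⟨h1, h2⟩ := h
  have hGp : ((0,0):ℝ×ℝ) ≤ G p := hO ▸ (hiff _ _).1 hp
  have hu : 0 < (G p).1 := lt_of_le_of_ne hGp.1 (Ne.symm h1)
  have hv : 0 < (G p).2 := lt_of_le_of_ne hGp.2 (Ne.symm h2)
  obtain ⟨r, hr⟩ := hsurj ((G p).1, 0)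
  obtain ⟨r', hr'⟩ := hsurj (0, (G p).2)
  have hr0 : ((0,0):ℝ×ℝ) ≤ r := (hiff _ _).2 (by rw [hO, hr]; exact ⟨hu.le, le_refl 0⟩)
  have hr'0 : ((0,0):ℝ×ℝ) ≤ r' := (hiff _ _).2 (by rw [hO, hr']; exact ⟨le_refl 0, hv.le⟩)
  have hrp : r ≤ p := (hiff _ _).2 (by rw [hr]; exact ⟨le_refl _, hv.le⟩)
  have hr'p : r' ≤ p := (hiff _ _).2 (by rw [hr']; exact ⟨hu.le, le_refl _⟩)
  have hcomp : r ≤ r' ∨ r' ≤ r := by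
    rcases hax with hax | hax
    · have e1 : r.1 = 0 := le_antisymm (hax ▸ hrp.1) hr0.1
      have e2 : r'.1 = 0 := le_antisymm (hax ▸ hr'p.1) hr'0.1
      rcases le_total r.2 r'.2 with h | h
      · exact Or.inl ⟨by rw [e1, e2], h⟩
      · exact Or.inr ⟨by rw [e1, e2], h⟩
    · have e1 : r.2 = 0 := le_antisymm (hax ▸ hrp.2) hr0.2
      have e2 : r'.2 = 0 := le_antisymm (hax ▸ hr'p.2) hr'0.2
      rcases le_total r.1 r'.1 with h | h
      · exact Or.inl ⟨h, by rw [e1, e2]⟩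
      · exact Or.inr ⟨h, by rw [e1, e2]⟩
  rcases hcomp with h | h
  · have := (hiff _ _).1 h
    rw [hr, hr'] at this
    exact absurd this.1 (not_le.2 hu)
  · have := (hiff _ _).1 h
    rw [hr, hr'] at this
    exact absurd this.2 (not_le.2 hv)

private lemma aux_axisNeg (G : ℝ × ℝ → ℝ × ℝ)
    (hsurj : Function.Surjective G)
    (hiff : ∀ p q : ℝ × ℝ, p ≤ q ↔ G p ≤ G q)
    (hO : G (0, 0) = (0, 0)) (p : ℝ × ℝ) (hp : p ≤ ((0,0) : ℝ × ℝ))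
    (hax : p.1 = 0 ∨ p.2 = 0) : (G p).1 = 0 ∨ (G p).2 = 0 := by
  by_contra h
  push_neg at h
  obtain ⟨h1, h2⟩ := h
  have hGp : G p ≤ ((0,0):ℝ×ℝ) := hO ▸ (hiff _ _).1 hp
  have hu : (G p).1 < 0 := lt_of_le_of_ne hGp.1 h1
  have hv : (G p).2 < 0 := lt_of_le_of_ne hGp.2 h2
  obtain ⟨r, hr⟩ := hsurj ((G p).1, 0)
  obtain ⟨r', hr'⟩ := hsurj (0, (G p).2)
  have hr0 : r ≤ ((0,0):ℝ×ℝ) := (hiff _ _).2 (by rw [hO, hr]; exact ⟨hu.le, le_refl 0⟩)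
  have hr'0 : r' ≤ ((0,0):ℝ×ℝ) := (hiff _ _).2 (by rw [hO, hr']; exact ⟨le_refl 0, hv.le⟩)
  have hrp : p ≤ r := (hiff _ _).2 (by rw [hr]; exact ⟨le_refl _, hv.le⟩)
  have hr'p : p ≤ r' := (hiff _ _).2 (by rw [hr']; exact ⟨hu.le, le_refl _⟩)
  have hcomp : r ≤ r' ∨ r' ≤ r := by
    rcases hax with hax | hax
    · have e1 : r.1 = 0 := le_antisymm hr0.1 (hax ▸ hrp.1)
      have e2 : r'.1 = 0 := le_antisymm hr'0.1 (hax ▸ hr'p.1)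
      rcases le_total r.2 r'.2 with h | h
      · exact Or.inl ⟨by rw [e1, e2], h⟩
      · exact Or.inr ⟨by rw [e1, e2], h⟩
    · have e1 : r.2 = 0 := le_antisymm hr0.2 (hax ▸ hrp.2)
      have e2 : r'.2 = 0 := le_antisymm hr'0.2 (hax ▸ hr'p.2)
      rcases le_total r.1 r'.1 with h | h
      · exact Or.inl ⟨h, by rw [e1, e2]⟩
      · exact Or.inr ⟨h, by rw [e1, e2]⟩
  rcases hcomp with h | h
  · have := (hiff _ _).1 h
    rw [hr, hr'] at this
    exact absurd this.2 (not_le.2 hv)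
  · have := (hiff _ _).1 h
    rw [hr, hr'] at this
    exact absurd this.1 (not_le.2 hu)

private lemma aux_main (G : ℝ × ℝ → ℝ × ℝ)
    (hsurj : Function.Surjective G)
    (hiff : ∀ p q : ℝ × ℝ, p ≤ q ↔ G p ≤ G q)
    (hO : G (0, 0) = (0, 0)) (h1 : (G (1, 0)).2 = 0) :
    Set.MapsTo G {p : ℝ × ℝ | p.2 = 0} {p : ℝ × ℝ | p.2 = 0} ∧
      Set.MapsTo G {p : ℝ × ℝ | p.1 = 0} {p : ℝ × ℝ | p.1 = 0} := by
  have hne0 : ∀ p : ℝ × ℝ, p ≠ (0,0) → G p ≠ (0,0) := by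
    intro p hp hGp
    exact hp (aux_inj G hiff (hGp.trans hO.symm))
  have hu : 0 < (G (1,0)).1 := by
    have hge : ((0,0):ℝ×ℝ) ≤ G (1,0) := hO ▸ (hiff _ _).1 ⟨zero_le_one, le_refl 0⟩
    rcases lt_or_eq_of_le hge.1 with h | h
    · exact h
    · exact absurd (Prod.ext h.symm h1) (hne0 _ (by norm_num [Prod.ext_iff]))
  have Xpos : ∀ a : ℝ, 0 < a → (G (a,0)).2 = 0 := by
    intro a ha
    rcases aux_axisPos G hsurj hiff hO (a,0) ⟨ha.le, le_refl 0⟩ (Or.inr rfl) with hax | hax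
    · by_contra h2
      have hge : ((0,0):ℝ×ℝ) ≤ G (a,0) := hO ▸ (hiff _ _).1 ⟨ha.le, le_refl 0⟩
      have hv : 0 < (G (a,0)).2 := lt_of_le_of_ne hge.2 (Ne.symm h2)
      rcases le_total a 1 with h | h
      · have h' := ((hiff ((a,0):ℝ×ℝ) (1,0)).1 ⟨h, le_refl 0⟩).2
        rw [h1] at h'
        exact absurd h' (not_le.2 hv)
      · have h' := ((hiff ((1,0):ℝ×ℝ) (a,0)).1 ⟨h, le_refl 0⟩).1
        rw [hax] at h'
        exact absurd h' (not_le.2 hu)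
    · exact hax
  have Ypos : ∀ b : ℝ, 0 < b → (G (0,b)).1 = 0 := by
    intro b hb
    rcases aux_axisPos G hsurj hiff hO (0,b) ⟨le_refl 0, hb.le⟩ (Or.inl rfl) with hax | hax
    · exact hax
    · exfalso
      rcases le_total (G (0,b)).1 (G (1,0)).1 with h | h
      · have : ((0,b):ℝ×ℝ) ≤ (1,0) := (hiff _ _).2 ⟨h, by rw [hax, h1]⟩
        exact absurd this.2 (not_le.2 hb)
      · have : ((1,0):ℝ×ℝ) ≤ (0,b) := (hiff _ _).2 ⟨h, by rw [hax, h1]⟩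
        exact absurd this.1 (by norm_num)
  have Xneg : ∀ a : ℝ, a < 0 → (G (a,0)).2 = 0 := by
    intro a ha
    rcases aux_axisNeg G hsurj hiff hO (a,0) ⟨ha.le, le_refl 0⟩ (Or.inr rfl) with hax | hax
    · exfalso
      have hs1 : G (a,0) ≤ G (a,1) := (hiff _ _).1 ⟨le_refl a, zero_le_one⟩
      have hs2 : G (a,1) ≤ G (0,1) := (hiff _ _).1 ⟨ha.le, le_refl 1⟩
      have hGs1 : (G (a,1)).1 = 0 :=
        le_antisymm (by rw [← Ypos 1 one_pos]; exact hs2.1) (by rw [← hax]; exact hs1.1)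
      rcases le_total (G (a,1)).2 0 with h | h
      · have : ((a,1):ℝ×ℝ) ≤ (0,0) := (hiff _ _).2 (by rw [hO]; exact ⟨hGs1.le, h⟩)
        exact absurd this.2 (by norm_num)
      · have : ((0,0):ℝ×ℝ) ≤ (a,1) := (hiff _ _).2 (by rw [hO]; exact ⟨hGs1.ge, h⟩)
        exact absurd this.1 (not_le.2 ha)
    · exact hax
  have Yneg : ∀ b : ℝ, b < 0 → (G (0,b)).1 = 0 := by
    intro b hb
    rcases aux_axisNeg G hsurj hiff hO (0,b) ⟨le_refl 0, hb.le⟩ (Or.inl rfl) with hax | hax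
    · exact hax
    · exfalso
      have hs1 : G (0,b) ≤ G (1,b) := (hiff _ _).1 ⟨zero_le_one, le_refl b⟩
      have hs2 : G (1,b) ≤ G (1,0) := (hiff _ _).1 ⟨le_refl 1, hb.le⟩
      have hGs2 : (G (1,b)).2 = 0 :=
        le_antisymm (by rw [← h1]; exact hs2.2) (by rw [← hax]; exact hs1.2)
      rcases le_total (G (1,b)).1 0 with h | h
      · have : ((1,b):ℝ×ℝ) ≤ (0,0) := (hiff _ _).2 (by rw [hO]; exact ⟨h, hGs2.le⟩)
        exact absurd this.1 (by norm_num)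
      · have : ((0,0):ℝ×ℝ) ≤ (1,b) := (hiff _ _).2 (by rw [hO]; exact ⟨h, hGs2.ge⟩)
        exact absurd this.2 (not_le.2 hb)
  constructor
  · rintro ⟨x, y⟩ hp
    simp only [Set.mem_setOf_eq] at hp ⊢
    subst hp
    rcases lt_trichotomy x 0 with h | h | h
    · exact Xneg x h
    · subst h; rw [hO]
    · exact Xpos x h
  · rintro ⟨x, y⟩ hp
    simp only [Set.mem_setOf_eq] at hp ⊢
    subst hp
    rcases lt_trichotomy y 0 with h | h | h
    · exact Yneg y h
    · subst h; rw [hO]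
    · exact Ypos y h

theorem stmt_13 (G : ℝ × ℝ → ℝ × ℝ)
    (hsurj : Function.Surjective G)
    (hiff : ∀ p q : ℝ × ℝ, p ≤ q ↔ G p ≤ G q)
    (hO : G (0, 0) = (0, 0)) :
    (Set.MapsTo G {p : ℝ × ℝ | p.2 = 0} {p : ℝ × ℝ | p.2 = 0} ∧
       Set.MapsTo G {p : ℝ × ℝ | p.1 = 0} {p : ℝ × ℝ | p.1 = 0}) ∨
    (Set.MapsTo G {p : ℝ × ℝ | p.2 = 0} {p : ℝ × ℝ | p.1 = 0} ∧
       Set.MapsTo G {p : ℝ × ℝ | p.1 = 0} {p : ℝ × ℝ | p.2 = 0}) := by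
  have he1 := aux_axisPos G hsurj hiff hO (1,0) ⟨zero_le_one, le_refl 0⟩ (Or.inr rfl)
  rcases he1 with h | h
  · -- G(1,0) on y-axis : swap case
    right
    set G' : ℝ × ℝ → ℝ × ℝ := Prod.swap ∘ G with hG'
    have hsurj' : Function.Surjective G' := Prod.swap_surjective.comp hsurj
    have hiff' : ∀ p q : ℝ × ℝ, p ≤ q ↔ G' p ≤ G' q := by
      intro p q
      rw [hiff p q]
      exact (Prod.swap_le_swap).symm
    have hO' : G' (0,0) = (0,0) := by
      show Prod.swap (G (0,0)) = (0,0)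
      rw [hO]
      rfl
    have h1' : (G' (1,0)).2 = 0 := by simpa [hG'] using h
    obtain ⟨m1, m2⟩ := aux_main G' hsurj' hiff' hO' h1'
    constructor
    · intro p hp
      have := m1 hp
      simpa [hG'] using this
    · intro p hp
      have := m2 hp
      simpa [hG'] using this
  · left
    exact aux_main G hsurj hiff hO h
end

section
/- The set N of maps ℝ² → ℝ² of the form (x,y) ↦ (f(x), g(y)), with f, g increasing homeomorphisms of ℝ, is a normal subgroup of the group B of all order automorphisms of ℝ × ℝ with the product order. -/
open Function

lemma mkIncHomeo {f : ℝ → ℝ} (hm : StrictMono f) (hs : Surjective f) : IncHomeo f := by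
  refine ⟨hm, ?_, hm.injective, hs⟩
  have := (StrictMono.orderIsoOfSurjective f hm hs).continuous
  rwa [StrictMono.coe_orderIsoOfSurjective] at this

lemma inv_strictMono {f : ℝ → ℝ} (hm : StrictMono f) (hs : Surjective f) :
    StrictMono (invFun f) := by
  intro a c hac
  by_contra h
  push_neg at h
  have h2 := hm.monotone h
  rw [rightInverse_invFun hs, rightInverse_invFun hs] at h2
  exact absurd h2 (not_le.mpr hac)

lemma inv_surj {f : ℝ → ℝ} (hf : Injective f) : Surjective (invFun f) :=
  fun x => ⟨f x, leftInverse_invFun hf x⟩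

lemma incHomeo_inv {f : ℝ → ℝ} (hf : IncHomeo f) : IncHomeo (invFun f) :=
  mkIncHomeo (inv_strictMono hf.1 hf.2.2.2) (inv_surj hf.2.2.1)

lemma comp_of_share {p q : ℝ × ℝ} (h : p.1 = q.1 ∨ p.2 = q.2) : p ≤ q ∨ q ≤ p := by
  rcases h with h | h
  · rcases le_total p.2 q.2 with h2 | h2
    · exact Or.inl (Prod.le_def.mpr ⟨h.le, h2⟩)
    · exact Or.inr (Prod.le_def.mpr ⟨h.ge, h2⟩)
  · rcases le_total p.1 q.1 with h1 | h1
    · exact Or.inl (Prod.le_def.mpr ⟨h1, h.le⟩)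
    · exact Or.inr (Prod.le_def.mpr ⟨h1, h.ge⟩)

section Classify

variable {b : ℝ × ℝ → ℝ × ℝ} (hs : Surjective b)
  (hiff : ∀ p q : ℝ × ℝ, p ≤ q ↔ b p ≤ b q)

include hs hiff

lemma b_inj : Injective b := fun p q h =>
  le_antisymm ((hiff p q).2 h.le) ((hiff q p).2 h.ge)

lemma key {p q : ℝ × ℝ} (hpq : p ≤ q) (hsh : p.1 = q.1 ∨ p.2 = q.2) :
    (b p).1 = (b q).1 ∨ (b p).2 = (b q).2 := by
  by_contra hcon
  push_neg at hcon
  obtain ⟨h1, h2⟩ := hcon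
  have hle : b p ≤ b q := (hiff p q).1 hpq
  have hlt1 : (b p).1 < (b q).1 := lt_of_le_of_ne (Prod.le_def.1 hle).1 h1
  have hlt2 : (b p).2 < (b q).2 := lt_of_le_of_ne (Prod.le_def.1 hle).2 h2
  obtain ⟨r, hr⟩ := hs ((b p).1, (b q).2)
  obtain ⟨t, ht⟩ := hs ((b q).1, (b p).2)
  have hpr : p ≤ r := (hiff p r).2 (by rw [hr]; exact Prod.le_def.mpr ⟨le_refl _, hlt2.le⟩)
  have hrq : r ≤ q := (hiff r q).2 (by rw [hr]; exact Prod.le_def.mpr ⟨hlt1.le, le_refl _⟩)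
  have hpt : p ≤ t := (hiff p t).2 (by rw [ht]; exact Prod.le_def.mpr ⟨hlt1.le, le_refl _⟩)
  have htq : t ≤ q := (hiff t q).2 (by rw [ht]; exact Prod.le_def.mpr ⟨le_refl _, hlt2.le⟩)
  have hcomp : r ≤ t ∨ t ≤ r := by
    apply comp_of_share
    rcases hsh with h | h
    · left
      have e1 : r.1 = p.1 :=
        le_antisymm (h ▸ (Prod.le_def.1 hrq).1) (Prod.le_def.1 hpr).1
      have e2 : t.1 = p.1 :=
        le_antisymm (h ▸ (Prod.le_def.1 htq).1) (Prod.le_def.1 hpt).1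
      rw [e1, e2]
    · right
      have e1 : r.2 = p.2 :=
        le_antisymm (h ▸ (Prod.le_def.1 hrq).2) (Prod.le_def.1 hpr).2
      have e2 : t.2 = p.2 :=
        le_antisymm (h ▸ (Prod.le_def.1 htq).2) (Prod.le_def.1 hpt).2
      rw [e1, e2]
  rcases hcomp with h | h
  · have := (hiff r t).1 h
    rw [hr, ht] at this
    exact absurd (Prod.le_def.1 this).2 (not_le.mpr hlt2)
  · have := (hiff t r).1 h
    rw [hr, ht] at this
    exact absurd (Prod.le_def.1 this).1 (not_le.mpr hlt1)

lemma refl_key {p q : ℝ × ℝ} (hpq : p ≤ q)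
    (hsh : (b p).1 = (b q).1 ∨ (b p).2 = (b q).2) : p.1 = q.1 ∨ p.2 = q.2 := by
  by_contra hcon
  push_neg at hcon
  obtain ⟨h1, h2⟩ := hcon
  have hlt1 : p.1 < q.1 := lt_of_le_of_ne (Prod.le_def.1 hpq).1 h1
  have hlt2 : p.2 < q.2 := lt_of_le_of_ne (Prod.le_def.1 hpq).2 h2
  set r : ℝ × ℝ := (p.1, q.2) with hrdef
  set t : ℝ × ℝ := (q.1, p.2) with htdef
  have hpr : p ≤ r := Prod.le_def.mpr ⟨le_refl _, hlt2.le⟩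
  have hrq : r ≤ q := Prod.le_def.mpr ⟨hlt1.le, le_refl _⟩
  have hpt : p ≤ t := Prod.le_def.mpr ⟨hlt1.le, le_refl _⟩
  have htq : t ≤ q := Prod.le_def.mpr ⟨le_refl _, hlt2.le⟩
  have hbpr := (hiff p r).1 hpr
  have hbrq := (hiff r q).1 hrq
  have hbpt := (hiff p t).1 hpt
  have hbtq := (hiff t q).1 htq
  have hcomp : b r ≤ b t ∨ b t ≤ b r := by
    apply comp_of_share
    rcases hsh with h | h
    · left
      have e1 : (b r).1 = (b p).1 :=
        le_antisymm (h ▸ (Prod.le_def.1 hbrq).1) (Prod.le_def.1 hbpr).1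
      have e2 : (b t).1 = (b p).1 :=
        le_antisymm (h ▸ (Prod.le_def.1 hbtq).1) (Prod.le_def.1 hbpt).1
      rw [e1, e2]
    · right
      have e1 : (b r).2 = (b p).2 :=
        le_antisymm (h ▸ (Prod.le_def.1 hbrq).2) (Prod.le_def.1 hbpr).2
      have e2 : (b t).2 = (b p).2 :=
        le_antisymm (h ▸ (Prod.le_def.1 hbtq).2) (Prod.le_def.1 hbpt).2
      rw [e1, e2]
  rcases hcomp with h | h
  · have hrt : r ≤ t := (hiff r t).2 h
    exact absurd (Prod.le_def.1 hrt).2 (not_le.mpr hlt2)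
  · have htr : t ≤ r := (hiff t r).2 h
    exact absurd (Prod.le_def.1 htr).1 (not_le.mpr hlt1)

lemma share_or {p q : ℝ × ℝ} (hsh : p.1 = q.1 ∨ p.2 = q.2) :
    (b p).1 = (b q).1 ∨ (b p).2 = (b q).2 := by
  rcases comp_of_share hsh with h | h
  · exact key hs hiff h hsh
  · exact (key hs hiff h (hsh.imp Eq.symm Eq.symm)).imp Eq.symm Eq.symm

lemma noShare {p q : ℝ × ℝ} (h1 : p.1 ≠ q.1) (h2 : p.2 ≠ q.2) :
    ¬((b p).1 = (b q).1 ∨ (b p).2 = (b q).2) := by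
  intro hsh
  rcases comp_of_share hsh with h | h
  · rcases refl_key hs hiff ((hiff p q).2 h) hsh with h' | h'
    · exact h1 h'
    · exact h2 h'
  · rcases refl_key hs hiff ((hiff q p).2 h) (hsh.imp Eq.symm Eq.symm) with h' | h'
    · exact h1 h'.symm
    · exact h2 h'.symm

lemma corner {p q r : ℝ × ℝ} (h1 : p.2 = q.2) (h2 : p.1 ≠ q.1)
    (h3 : q.1 = r.1) (h4 : q.2 ≠ r.2) :
    ((b p).2 = (b q).2 ↔ (b q).1 = (b r).1) := by
  have hpq := share_or hs hiff (p := p) (q := q) (Or.inr h1)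
  have hqr := share_or hs hiff (p := q) (q := r) (Or.inl h3)
  have hpr1 : p.1 ≠ r.1 := h3 ▸ h2
  have hpr2 : p.2 ≠ r.2 := h1 ▸ h4
  have hnot := noShare hs hiff hpr1 hpr2
  constructor
  · intro hT
    rcases hqr with h | h
    · exact h
    · exact absurd (Or.inr (hT.trans h)) hnot
  · intro hT
    rcases hpq with h | h
    · exact absurd (Or.inl (h.trans hT)) hnot
    · exact h

lemma hconst (x1 x2 c x1' x2' c' : ℝ) (h12 : x1 ≠ x2) (h12' : x1' ≠ x2') :
    ((b (x1, c)).2 = (b (x2, c)).2 ↔ (b (x1', c')).2 = (b (x2', c')).2) := by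
  set d : ℝ := max c c' + 1 with hd
  set u : ℝ := max x2 x1' + 1 with hu
  set d' : ℝ := c' + 1 with hd'
  have hdc : c ≠ d := by
    have : c ≤ max c c' := le_max_left _ _
    intro h; rw [hd] at h; linarith
  have hdc' : c' ≠ d := by
    have : c' ≤ max c c' := le_max_right _ _
    intro h; rw [hd] at h; linarith
  have hux2 : x2 ≠ u := by
    have : x2 ≤ max x2 x1' := le_max_left _ _
    intro h; rw [hu] at h; linarith
  have hux1' : x1' ≠ u := by
    have : x1' ≤ max x2 x1' := le_max_right _ _
    intro h; rw [hu] at h; linarith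
  have hd'c' : c' ≠ d' := by rw [hd']; intro h; linarith
  -- A ↔ B
  have e1 : (b (x1, c)).2 = (b (x2, c)).2 ↔ (b (x2, c)).1 = (b (x2, d)).1 :=
    corner hs hiff (p := (x1, c)) (q := (x2, c)) (r := (x2, d)) rfl h12 rfl hdc
  -- corner at (x2,d): p=(u,d), q=(x2,d), r=(x2,c)
  have e2 : (b (u, d)).2 = (b (x2, d)).2 ↔ (b (x2, d)).1 = (b (x2, c)).1 :=
    corner hs hiff (p := (u, d)) (q := (x2, d)) (r := (x2, c)) rfl (Ne.symm hux2) rfl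
      (Ne.symm hdc)
  -- corner: p=(x2,d), q=(u,d), r=(u,c')
  have e3 : (b (x2, d)).2 = (b (u, d)).2 ↔ (b (u, d)).1 = (b (u, c')).1 :=
    corner hs hiff (p := (x2, d)) (q := (u, d)) (r := (u, c')) rfl hux2 rfl (Ne.symm hdc')
  -- corner: p=(x1',c'), q=(u,c'), r=(u,d)
  have e4 : (b (x1', c')).2 = (b (u, c')).2 ↔ (b (u, c')).1 = (b (u, d)).1 :=
    corner hs hiff (p := (x1', c')) (q := (u, c')) (r := (u, d)) rfl hux1' rfl hdc'
  -- corner: p=(u,c'), q=(x1',c'), r=(x1',d')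
  have e5 : (b (u, c')).2 = (b (x1', c')).2 ↔ (b (x1', c')).1 = (b (x1', d')).1 :=
    corner hs hiff (p := (u, c')) (q := (x1', c')) (r := (x1', d')) rfl (Ne.symm hux1') rfl
      hd'c'
  -- corner: p=(x2',c'), q=(x1',c'), r=(x1',d')
  have e6 : (b (x2', c')).2 = (b (x1', c')).2 ↔ (b (x1', c')).1 = (b (x1', d')).1 :=
    corner hs hiff (p := (x2', c')) (q := (x1', c')) (r := (x1', d')) rfl (Ne.symm h12') rfl
      hd'c'
  constructor
  · intro hA
    have hB := e1.1 hA
    have hC := e2.2 hB.symm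
    have hD := e3.1 hC.symm
    have hE := e4.2 hD.symm
    have hF := e5.1 hE.symm
    exact (e6.2 hF).symm
  · intro hG
    have hF := e6.1 hG.symm
    have hE := e5.2 hF
    have hD := e4.1 hE.symm
    have hC := e3.2 hD.symm
    have hB := e2.1 hC.symm
    exact e1.2 hB.symm

lemma classify :
    (∃ f g : ℝ → ℝ, StrictMono f ∧ StrictMono g ∧ Surjective f ∧ Surjective g ∧
      ∀ p : ℝ × ℝ, b p = (f p.1, g p.2)) ∨
    (∃ u w : ℝ → ℝ, StrictMono u ∧ StrictMono w ∧ Surjective u ∧ Surjective w ∧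
      ∀ p : ℝ × ℝ, b p = (u p.2, w p.1)) := by
  have hinj := b_inj hs hiff
  by_cases hT : (b (0, 0)).2 = (b (1, 0)).2
  · -- coordinate-preserving case
    left
    set f : ℝ → ℝ := fun x => (b (x, 0)).1 with hfdef
    set g : ℝ → ℝ := fun y => (b (0, y)).2 with hgdef
    have hform : ∀ p : ℝ × ℝ, b p = (f p.1, g p.2) := by
      rintro ⟨x, y⟩
      have hcoord1 : (b (x, y)).1 = f x := by
        by_cases hy : y = 0
        · subst hy; rfl
        · have hc := corner hs hiff (p := (x + 1, 0)) (q := (x, 0)) (r := (x, y)) rfl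
            (by simp) rfl (Ne.symm hy)
          have hhc : (b (x + 1, 0)).2 = (b (x, 0)).2 :=
            (hconst hs hiff (x + 1) x 0 0 1 0 (by intro h; linarith) (by norm_num)).2 hT
          exact (hc.1 hhc).symm
      have hcoord2 : (b (x, y)).2 = g y := by
        by_cases hx : x = 0
        · subst hx; rfl
        · have hhc : (b (0, y)).2 = (b (x, y)).2 :=
            (hconst hs hiff 0 x y 0 1 0 (Ne.symm hx) (by norm_num)).2 hT
          exact hhc.symm
      exact Prod.ext hcoord1 hcoord2
    have hfm : StrictMono f := by
      intro x x' hxx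
      have hle : (x, (0 : ℝ)) ≤ (x', 0) := Prod.le_def.mpr ⟨hxx.le, le_refl _⟩
      have h1 : b (x, 0) ≤ b (x', 0) := (hiff _ _).1 hle
      have h2 : f x ≤ f x' := by
        have := (Prod.le_def.1 h1).1
        rwa [hform (x, 0), hform (x', 0)] at this
      refine lt_of_le_of_ne h2 fun heq => ?_
      have : b (x, 0) = b (x', 0) := by
        rw [hform (x, 0), hform (x', 0)]
        exact Prod.ext heq rfl
      have := hinj this
      simp at this
      linarith
    have hgm : StrictMono g := by
      intro y y' hyy
      have hle : ((0 : ℝ), y) ≤ (0, y') := Prod.le_def.mpr ⟨le_refl _, hyy.le⟩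
      have h1 : b (0, y) ≤ b (0, y') := (hiff _ _).1 hle
      have h2 : g y ≤ g y' := by
        have := (Prod.le_def.1 h1).2
        rwa [hform (0, y), hform (0, y')] at this
      refine lt_of_le_of_ne h2 fun heq => ?_
      have : b ((0 : ℝ), y) = b (0, y') := by
        rw [hform (0, y), hform (0, y')]
        exact Prod.ext rfl heq
      have := hinj this
      simp at this
      linarith
    have hfs : Surjective f := by
      intro t
      obtain ⟨p, hp⟩ := hs (t, g 0)
      rw [hform p] at hp
      exact ⟨p.1, congrArg Prod.fst hp⟩
    have hgs : Surjective g := by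
      intro t
      obtain ⟨p, hp⟩ := hs (f 0, t)
      rw [hform p] at hp
      exact ⟨p.2, congrArg Prod.snd hp⟩
    exact ⟨f, g, hfm, hgm, hfs, hgs, hform⟩
  · -- coordinate-swapping case
    right
    set u : ℝ → ℝ := fun y => (b (0, y)).1 with hudef
    set w : ℝ → ℝ := fun x => (b (x, 0)).2 with hwdef
    have hform : ∀ p : ℝ × ℝ, b p = (u p.2, w p.1) := by
      rintro ⟨x, y⟩
      have hcoord1 : (b (x, y)).1 = u y := by
        by_cases hx : x = 0
        · subst hx; rfl
        · have hor := share_or hs hiff (p := ((0 : ℝ), y)) (q := (x, y)) (Or.inr rfl)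
          rcases hor with h | h
          · exact h.symm
          · exfalso
            apply hT
            exact (hconst hs hiff 0 x y 0 1 0 (Ne.symm hx) (by norm_num)).1 h
      have hcoord2 : (b (x, y)).2 = w x := by
        by_cases hy : y = 0
        · subst hy; rfl
        · have hor := share_or hs hiff (p := (x, (0 : ℝ))) (q := (x, y)) (Or.inl rfl)
          rcases hor with h | h
          · exfalso
            have hc := corner hs hiff (p := (x + 1, 0)) (q := (x, 0)) (r := (x, y)) rfl
              (by simp) rfl (Ne.symm hy)
            apply hT
            exact (hconst hs hiff (x + 1) x 0 0 1 0 (by intro hh; linarith)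
              (by norm_num)).1 (hc.2 h)
          · exact h.symm
      exact Prod.ext hcoord1 hcoord2
    have hum : StrictMono u := by
      intro y y' hyy
      have hle : ((0 : ℝ), y) ≤ (0, y') := Prod.le_def.mpr ⟨le_refl _, hyy.le⟩
      have h1 : b (0, y) ≤ b (0, y') := (hiff _ _).1 hle
      have h2 : u y ≤ u y' := by
        have := (Prod.le_def.1 h1).1
        rwa [hform (0, y), hform (0, y')] at this
      refine lt_of_le_of_ne h2 fun heq => ?_
      have : b ((0 : ℝ), y) = b (0, y') := by
        rw [hform (0, y), hform (0, y')]
        exact Prod.ext heq rfl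
      have := hinj this
      simp at this
      linarith
    have hwm : StrictMono w := by
      intro x x' hxx
      have hle : (x, (0 : ℝ)) ≤ (x', 0) := Prod.le_def.mpr ⟨hxx.le, le_refl _⟩
      have h1 : b (x, 0) ≤ b (x', 0) := (hiff _ _).1 hle
      have h2 : w x ≤ w x' := by
        have := (Prod.le_def.1 h1).2
        rwa [hform (x, 0), hform (x', 0)] at this
      refine lt_of_le_of_ne h2 fun heq => ?_
      have : b (x, (0 : ℝ)) = b (x', 0) := by
        rw [hform (x, 0), hform (x', 0)]
        exact Prod.ext rfl heq
      have := hinj this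
      simp at this
      linarith
    have hus : Surjective u := by
      intro t
      obtain ⟨p, hp⟩ := hs (t, w 0)
      rw [hform p] at hp
      exact ⟨p.2, congrArg Prod.fst hp⟩
    have hws : Surjective w := by
      intro t
      obtain ⟨p, hp⟩ := hs (u 0, t)
      rw [hform p] at hp
      exact ⟨p.1, congrArg Prod.snd hp⟩
    exact ⟨u, w, hum, hwm, hus, hws, hform⟩

end Classify

lemma incHomeo_id : IncHomeo id := ⟨strictMono_id, continuous_id, Function.bijective_id⟩

lemma incHomeo_comp {f g : ℝ → ℝ} (hf : IncHomeo f) (hg : IncHomeo g) : IncHomeo (f ∘ g) :=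
  ⟨hf.1.comp hg.1, hf.2.1.comp hg.2.1, hf.2.2.comp hg.2.2⟩


/-- Membership in the group `B` of order automorphisms of ℝ × ℝ (product order). -/
def OrdAuto (G : ℝ × ℝ → ℝ × ℝ) : Prop :=
  Function.Surjective G ∧ ∀ p q : ℝ × ℝ, p ≤ q ↔ G p ≤ G q

/-- Membership in `N`: the coordinate-wise maps built from increasing homeomorphisms. -/
def CoordMap (G : ℝ × ℝ → ℝ × ℝ) : Prop :=
  ∃ f g : ℝ → ℝ, IncHomeo f ∧ IncHomeo g ∧ G = fun p => (f p.1, g p.2)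

/-- `N` is a normal subgroup of `B`: it is contained in `B`, contains the identity,
is closed under composition and inverses, and is closed under conjugation by
elements of `B`. -/
theorem stmt_14 :
    (∀ n, CoordMap n → OrdAuto n) ∧
    CoordMap id ∧
    (∀ n m, CoordMap n → CoordMap m → CoordMap (n ∘ m)) ∧
    (∀ n, CoordMap n → ∃ n', CoordMap n' ∧ n ∘ n' = id ∧ n' ∘ n = id) ∧
    (∀ b n b', OrdAuto b → CoordMap n → (b ∘ b' = id ∧ b' ∘ b = id) →
      CoordMap (b ∘ n ∘ b')) := by
  refine ⟨?_, ?_, ?_, ?_, ?_⟩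
  · -- N ⊆ B
    rintro n ⟨f, g, hf, hg, rfl⟩
    constructor
    · rintro ⟨a, c⟩
      obtain ⟨x, hx⟩ := hf.2.2.2 a
      obtain ⟨y, hy⟩ := hg.2.2.2 c
      exact ⟨(x, y), by simp [hx, hy]⟩
    · intro p q
      simp only [Prod.le_def]
      rw [hf.1.le_iff_le, hg.1.le_iff_le]
  · -- identity
    exact ⟨id, id, incHomeo_id, incHomeo_id, rfl⟩
  · -- composition
    rintro n m ⟨f1, g1, hf1, hg1, rfl⟩ ⟨f2, g2, hf2, hg2, rfl⟩
    exact ⟨f1 ∘ f2, g1 ∘ g2, incHomeo_comp hf1 hf2, incHomeo_comp hg1 hg2, rfl⟩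
  · -- inverses
    rintro n ⟨f, g, hf, hg, rfl⟩
    refine ⟨fun p => (invFun f p.1, invFun g p.2),
      ⟨invFun f, invFun g, incHomeo_inv hf, incHomeo_inv hg, rfl⟩, ?_, ?_⟩
    · funext p
      exact Prod.ext (rightInverse_invFun hf.2.2.2 p.1) (rightInverse_invFun hg.2.2.2 p.2)
    · funext p
      exact Prod.ext (leftInverse_invFun hf.2.2.1 p.1) (leftInverse_invFun hg.2.2.1 p.2)
  · -- conjugation
    rintro b n b' ⟨hbs, hbi⟩ ⟨f, g, hf, hg, rfl⟩ ⟨hbb', hb'b⟩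
    have hbb'app : ∀ p, b (b' p) = p := fun p => congrFun hbb' p
    rcases classify hbs hbi with ⟨f0, g0, hf0m, hg0m, hf0s, hg0s, hform⟩ |
        ⟨u, w, hum, hwm, hus, hws, hform⟩
    · -- b is coordinate-preserving
      have hb'1 : ∀ p : ℝ × ℝ, (b' p).1 = invFun f0 p.1 := by
        intro p
        apply hf0m.injective
        rw [rightInverse_invFun hf0s]
        have := hbb'app p
        rw [hform (b' p)] at this
        exact congrArg Prod.fst this
      have hb'2 : ∀ p : ℝ × ℝ, (b' p).2 = invFun g0 p.2 := by
        intro p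
        apply hg0m.injective
        rw [rightInverse_invFun hg0s]
        have := hbb'app p
        rw [hform (b' p)] at this
        exact congrArg Prod.snd this
      refine ⟨f0 ∘ f ∘ invFun f0, g0 ∘ g ∘ invFun g0,
        incHomeo_comp (mkIncHomeo hf0m hf0s)
          (incHomeo_comp hf (mkIncHomeo (inv_strictMono hf0m hf0s) (inv_surj hf0m.injective))),
        incHomeo_comp (mkIncHomeo hg0m hg0s)
          (incHomeo_comp hg (mkIncHomeo (inv_strictMono hg0m hg0s) (inv_surj hg0m.injective))),
        ?_⟩
      funext p
      show b ((fun p : ℝ × ℝ => (f p.1, g p.2)) (b' p)) = _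
      rw [hform ((f (b' p).1, g (b' p).2))]
      simp only [Function.comp]
      rw [hb'1 p, hb'2 p]
    · -- b is coordinate-swapping
      have hb'2 : ∀ p : ℝ × ℝ, (b' p).2 = invFun u p.1 := by
        intro p
        apply hum.injective
        rw [rightInverse_invFun hus]
        have := hbb'app p
        rw [hform (b' p)] at this
        exact congrArg Prod.fst this
      have hb'1 : ∀ p : ℝ × ℝ, (b' p).1 = invFun w p.2 := by
        intro p
        apply hwm.injective
        rw [rightInverse_invFun hws]
        have := hbb'app p
        rw [hform (b' p)] at this
        exact congrArg Prod.snd this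
      refine ⟨u ∘ g ∘ invFun u, w ∘ f ∘ invFun w,
        incHomeo_comp (mkIncHomeo hum hus)
          (incHomeo_comp hg (mkIncHomeo (inv_strictMono hum hus) (inv_surj hum.injective))),
        incHomeo_comp (mkIncHomeo hwm hws)
          (incHomeo_comp hf (mkIncHomeo (inv_strictMono hwm hws) (inv_surj hwm.injective))),
        ?_⟩
      funext p
      show b ((fun p : ℝ × ℝ => (f p.1, g p.2)) (b' p)) = _
      rw [hform ((f (b' p).1, g (b' p).2))]
      simp only [Function.comp]
      rw [hb'1 p, hb'2 p]
end

section
/- The group of order automorphisms of ℝ × ℝ with the product order is isomorphic to the semidirect product (Hom≤(ℝ) × Hom≤(ℝ)) ⋊ S₂, where Hom≤(ℝ) is the group of increasing homeomorphisms of ℝ and S₂ acts by swapping the two factors. -/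
/-- The action of `S₂` on `Hom≤(ℝ) × Hom≤(ℝ)` (realized as `Fin 2 → (ℝ ≃o ℝ)`,
where `ℝ ≃o ℝ` is the group of increasing homeomorphisms of ℝ) permuting the
two factors. -/
def swapAction : Equiv.Perm (Fin 2) →* MulAut (Fin 2 → (ℝ ≃o ℝ)) where
  toFun σ :=
    { toFun := fun v => v ∘ σ.symm
      invFun := fun v => v ∘ σ
      left_inv := fun v => by ext i : 1; simp
      right_inv := fun v => by ext i : 1; simp
      map_mul' := fun v w => rfl }
  map_one' := by ext v i; rfl
  map_mul' := fun σ τ => by ext v i; simp [Equiv.Perm.mul_def]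

/-!
Two points of a product of linear orders lie on a common horizontal or vertical line exactly
when the interval `[p ⊓ q, p ⊔ q]` is a chain; this is an order-theoretic property, so order
isomorphisms preserve alignment. Alignment then forces an order automorphism `G` of `α × β` to
send one vertical line, hence every vertical line, onto a vertical line (and every horizontal
line onto a horizontal one), or to do so after composing with the swap. So `G` is
`(x, y) ↦ (f x, g y)` or `(x, y) ↦ (f y, g x)`, which is the semidirect product decomposition.
-/

open Set

namespace OrderIso

variable {α β γ δ : Type*}

def prodCongr [LE α] [LE β] [LE γ] [LE δ] (f : α ≃o γ) (g : β ≃o δ) : α × β ≃o γ × δ where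
  toEquiv := f.toEquiv.prodCongr g.toEquiv
  map_rel_iff' := by simp [Prod.le_def]

@[simp]
lemma prodCongr_apply [LE α] [LE β] [LE γ] [LE δ] (f : α ≃o γ) (g : β ≃o δ)
    (p : α × β) : f.prodCongr g p = (f p.1, g p.2) :=
  rfl

lemma isChain_Icc_inf_sup_iff [Lattice α] [Lattice β] (e : α ≃o β) (p q : α) :
    IsChain (· ≤ ·) (Icc (e p ⊓ e q) (e p ⊔ e q)) ↔ IsChain (· ≤ ·) (Icc (p ⊓ q) (p ⊔ q)) := by
  rw [← e.map_inf, ← e.map_sup, ← e.image_Icc]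
  exact IsChain.image_relIso_iff

lemma exists_coe_eq_of_apply_eq [PartialOrder α] [Preorder β] [Preorder γ] [Preorder δ]
    (G : α × β ≃o γ × δ) {f : α → γ} {g : β → δ}
    (hG : ∀ p, G p = (f p.1, g p.2)) (b : β) : ∃ e : α ≃o γ, ⇑e = f := by
  have hf : ∀ x x', f x ≤ f x' ↔ x ≤ x' := fun x x' => by
    simpa [hG] using G.le_iff_le (x := (x, b)) (y := (x', b))
  refine ⟨OrderIso.ofSurjective (OrderEmbedding.ofMapLEIff f hf) fun u => ?_, rfl⟩
  obtain ⟨p, hp⟩ := G.surjective (u, g b)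
  exact ⟨p.1, by simpa [hG] using congrArg Prod.fst hp⟩

lemma exists_eq_prodCongr_of_apply_eq [PartialOrder α] [PartialOrder β] [Preorder γ] [Preorder δ]
    (G : α × β ≃o γ × δ) {f : α → γ} {g : β → δ}
    (hG : ∀ p, G p = (f p.1, g p.2)) (a : α) (b : β) :
    ∃ (e₁ : α ≃o γ) (e₂ : β ≃o δ), G = e₁.prodCongr e₂ := by
  obtain ⟨e₁, rfl⟩ := G.exists_coe_eq_of_apply_eq hG b
  obtain ⟨e₂, rfl⟩ := (prodComm.trans (G.trans prodComm)).exists_coe_eq_of_apply_eq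
    (f := g) (g := e₁) (fun p => by simp [hG]) a
  exact ⟨e₁, e₂, ext (funext hG)⟩

end OrderIso

section Aligned

variable {α β γ δ : Type*}

def Aligned (p q : α × β) : Prop := p.1 = q.1 ∨ p.2 = q.2

variable [LinearOrder α] [LinearOrder β] [LinearOrder γ] [LinearOrder δ]

lemma isChain_Icc_inf_sup_iff_aligned (p q : α × β) :
    IsChain (· ≤ ·) (Icc (p ⊓ q) (p ⊔ q)) ↔ Aligned p q := by
  constructor
  · intro h
    by_contra hpq
    obtain ⟨h₁, h₂⟩ := not_or.1 hpq
    have hlt₁ : min p.1 q.1 < max p.1 q.1 := min_lt_max.2 h₁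
    have hlt₂ : min p.2 q.2 < max p.2 q.2 := min_lt_max.2 h₂
    have hle₁ := hlt₁.le
    have hle₂ := hlt₂.le
    have := h (x := (min p.1 q.1, max p.2 q.2)) (y := (max p.1 q.1, min p.2 q.2))
      ⟨⟨le_rfl, hle₂⟩, ⟨hle₁, le_rfl⟩⟩ ⟨⟨hle₁, le_rfl⟩, ⟨le_rfl, hle₂⟩⟩
      (fun he => hlt₁.ne (congrArg Prod.fst he))
    rcases this with ⟨-, h'⟩ | ⟨h', -⟩
    · exact hlt₂.not_ge h'
    · exact hlt₁.not_ge h'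
  · rintro (h | h) x ⟨hx₁, hx₂⟩ y ⟨hy₁, hy₂⟩ -
    · have hx : x.1 = p.1 := le_antisymm (by simpa [h] using hx₂.1) (by simpa [h] using hx₁.1)
      have hy : y.1 = p.1 := le_antisymm (by simpa [h] using hy₂.1) (by simpa [h] using hy₁.1)
      rcases le_total x.2 y.2 with h' | h'
      · exact Or.inl ⟨(hx.trans hy.symm).le, h'⟩
      · exact Or.inr ⟨(hy.trans hx.symm).le, h'⟩
    · have hx : x.2 = p.2 := le_antisymm (by simpa [h] using hx₂.2) (by simpa [h] using hx₁.2)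
      have hy : y.2 = p.2 := le_antisymm (by simpa [h] using hy₂.2) (by simpa [h] using hy₁.2)
      rcases le_total x.1 y.1 with h' | h'
      · exact Or.inl ⟨h', (hx.trans hy.symm).le⟩
      · exact Or.inr ⟨h', (hy.trans hx.symm).le⟩

lemma OrderIso.aligned_apply_iff (G : α × β ≃o γ × δ) (p q : α × β) :
    Aligned (G p) (G q) ↔ Aligned p q := by
  rw [← isChain_Icc_inf_sup_iff_aligned, G.isChain_Icc_inf_sup_iff,
    isChain_Icc_inf_sup_iff_aligned]

namespace OrderIso

section
variable (G : α × β ≃o γ × δ) {a : α} {b b' : β}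

lemma fst_apply_eq_of_fst_apply_eq (hb : b ≠ b') (h : (G (a, b)).1 = (G (a, b')).1) (y : β) :
    (G (a, y)).1 = (G (a, b)).1 := by
  rcases (G.aligned_apply_iff (a, y) (a, b)).2 (.inl rfl) with h₁ | h₁
  · exact h₁
  rcases (G.aligned_apply_iff (a, y) (a, b')).2 (.inl rfl) with h₂ | h₂
  · exact h₂.trans h.symm
  · exact absurd (G.injective (Prod.ext h (h₁.symm.trans h₂))) (by simpa using hb)

lemma snd_apply_eq_of_fst_apply_eq (hb : b ≠ b') (h : (G (a, b)).1 = (G (a, b')).1)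
    (x : α) (y : β) :
    (G (x, y)).2 = (G (a, y)).2 := by
  by_contra hne
  have : Nontrivial β := nontrivial_of_ne b b' hb
  obtain ⟨y', hy'⟩ := exists_ne y
  have hfst : (G (x, y)).1 = (G (a, y')).1 := by
    rcases (G.aligned_apply_iff (x, y) (a, y)).2 (.inr rfl) with h₁ | h₁
    · rw [h₁, fst_apply_eq_of_fst_apply_eq G hb h y, fst_apply_eq_of_fst_apply_eq G hb h y']
    · exact absurd h₁ hne
  rcases (G.aligned_apply_iff (x, y) (a, y')).1 (.inl hfst) with hx | hy
  · subst hx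
    exact hne rfl
  · exact hy' hy.symm

lemma fst_apply_eq_fst_apply_of_fst_apply_eq (hb : b ≠ b') (h : (G (a, b)).1 = (G (a, b')).1)
    (x : α) (y y' : β) :
    (G (x, y)).1 = (G (x, y')).1 := by
  rcases (G.aligned_apply_iff (x, y) (x, y')).2 (.inl rfl) with h₁ | h₁
  · exact h₁
  rw [snd_apply_eq_of_fst_apply_eq G hb h, snd_apply_eq_of_fst_apply_eq G hb h x y'] at h₁
  have hy : G (a, y) = G (a, y') := Prod.ext
    ((fst_apply_eq_of_fst_apply_eq G hb h y).trans (fst_apply_eq_of_fst_apply_eq G hb h y').symm) h₁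
  obtain rfl : y = y' := by simpa using G.injective hy
  rfl

lemma exists_eq_prodCongr_of_fst_apply_eq (hb : b ≠ b') (h : (G (a, b)).1 = (G (a, b')).1) :
    ∃ (f : α ≃o γ) (g : β ≃o δ), G = f.prodCongr g :=
  G.exists_eq_prodCongr_of_apply_eq (f := fun x => (G (x, b)).1) (g := fun y => (G (a, y)).2)
    (fun ⟨x, y⟩ => Prod.ext (G.fst_apply_eq_fst_apply_of_fst_apply_eq hb h x y b)
      (G.snd_apply_eq_of_fst_apply_eq hb h x y)) a b

end

theorem eq_prodCongr_or_eq_prodComm_trans_prodCongr [Nonempty α] [Nontrivial β]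
    (G : α × β ≃o γ × δ) :
    (∃ (f : α ≃o γ) (g : β ≃o δ), G = f.prodCongr g) ∨
      ∃ (f : β ≃o γ) (g : α ≃o δ), G = prodComm.trans (f.prodCongr g) := by
  obtain ⟨a⟩ := ‹Nonempty α›
  obtain ⟨b, b', hb⟩ := exists_pair_ne β
  rcases (G.aligned_apply_iff (a, b) (a, b')).2 (.inl rfl) with h | h
  · exact .inl (G.exists_eq_prodCongr_of_fst_apply_eq hb h)
  · obtain ⟨f, g, hfg⟩ := (G.trans prodComm).exists_eq_prodCongr_of_fst_apply_eq hb h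
    refine .inr ⟨g, f, ext (funext fun p => ?_)⟩
    simpa using congrArg (fun e => (e p).swap) hfg

end OrderIso

end Aligned

lemma Equiv.Perm.eq_one_or_eq_swap_of_fin_two (σ : Equiv.Perm (Fin 2)) :
    σ = 1 ∨ σ = Equiv.swap 0 1 := by
  revert σ; decide

section
variable (α) [LE α]

def prodCongrHom : (Fin 2 → (α ≃o α)) →* (α × α ≃o α × α) where
  toFun v := (v 0).prodCongr (v 1)
  map_one' := rfl
  map_mul' _ _ := rfl

def prodCommHom : Equiv.Perm (Fin 2) →* (α × α ≃o α × α) where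
  toFun σ := if σ = 1 then 1 else OrderIso.prodComm
  map_one' := if_pos rfl
  map_mul' σ τ := by
    rcases σ.eq_one_or_eq_swap_of_fin_two with rfl | rfl <;>
      rcases τ.eq_one_or_eq_swap_of_fin_two with rfl | rfl <;>
      rfl

end

lemma prodCongrHom_comp_swapAction (σ : Equiv.Perm (Fin 2)) :
    (prodCongrHom ℝ).comp (swapAction σ).toMonoidHom =
      (MulAut.conj (prodCommHom ℝ σ)).toMonoidHom.comp (prodCongrHom ℝ) := by
  rcases σ.eq_one_or_eq_swap_of_fin_two with rfl | rfl <;> ext <;> rfl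

def semidirectToOrderIso :
    (Fin 2 → (ℝ ≃o ℝ)) ⋊[swapAction] Equiv.Perm (Fin 2) →* (ℝ × ℝ) ≃o (ℝ × ℝ) :=
  SemidirectProduct.lift (prodCongrHom ℝ) (prodCommHom ℝ) prodCongrHom_comp_swapAction

lemma semidirectToOrderIso_injective : Function.Injective semidirectToOrderIso := by
  rw [injective_iff_map_eq_one]
  rintro ⟨v, σ⟩ h
  have hv : ∀ p, prodCongrHom ℝ v (prodCommHom ℝ σ p) = p := DFunLike.congr_fun h
  rcases σ.eq_one_or_eq_swap_of_fin_two with rfl | rfl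
  · have hv₀ : v 0 = 1 := OrderIso.ext (funext fun x => congrArg Prod.fst (hv (x, 0)))
    have hv₁ : v 1 = 1 := OrderIso.ext (funext fun y => congrArg Prod.snd (hv (0, y)))
    have : v = 1 := funext (Fin.forall_fin_two.2 ⟨hv₀, hv₁⟩)
    rw [this]
    rfl
  · have h₀ : v 0 0 = 0 := congrArg Prod.fst (hv (0, 0))
    have h₁ : v 0 0 = 1 := congrArg Prod.fst (hv (1, 0))
    exact absurd (h₀.symm.trans h₁) zero_ne_one

lemma semidirectToOrderIso_surjective : Function.Surjective semidirectToOrderIso := by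
  intro G
  rcases G.eq_prodCongr_or_eq_prodComm_trans_prodCongr with ⟨f, g, rfl⟩ | ⟨f, g, rfl⟩
  · exact ⟨⟨![f, g], 1⟩, rfl⟩
  · exact ⟨⟨![f, g], Equiv.swap 0 1⟩, rfl⟩

theorem stmt_15 :
    Nonempty
      (((ℝ × ℝ) ≃o (ℝ × ℝ)) ≃*
        (Fin 2 → (ℝ ≃o ℝ)) ⋊[swapAction] Equiv.Perm (Fin 2)) :=
  ⟨(MulEquiv.ofBijective semidirectToOrderIso
    ⟨semidirectToOrderIso_injective, semidirectToOrderIso_surjective⟩).symm⟩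
end
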